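/- Let g_1, …, g_5 ∈ SU(2) each have eigenvalues exp(±2πiμ) with 2/5 < μ ≤ 1/2, and suppose g_1 g_2 g_3 g_4 g_5 = 1. Then no such tuple exists; i.e., the moduli space M_5(μ) of such tuples is empty for μ ∈ (2/5, 1/2]. -/
import Mathlib


open Matrix

/-- The special unitary group SU(r), realized as the subgroup of the unitary group
consisting of matrices of determinant one. -/
def SU (r : ℕ) : Subgroup (Matrix.unitaryGroup (Fin r) ℂ) where
  carrier := {g | (g : Matrix (Fin r) (Fin r) ℂ).det = 1}
  one_mem' := by simp
  mul_mem' := by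
    intro a b ha hb
    simp only [Set.mem_setOf_eq] at *
    have h : ((a * b : Matrix.unitaryGroup (Fin r) ℂ) : Matrix (Fin r) (Fin r) ℂ)
        = (a : Matrix (Fin r) (Fin r) ℂ) * b := rfl
    rw [h, Matrix.det_mul, ha, hb, one_mul]
  inv_mem' := by
    intro a ha
    simp only [Set.mem_setOf_eq] at *
    have h1 : ((a⁻¹ : Matrix.unitaryGroup (Fin r) ℂ) : Matrix (Fin r) (Fin r) ℂ) *
        (a : Matrix (Fin r) (Fin r) ℂ) = 1 := by
      have h : ((a⁻¹ * a : Matrix.unitaryGroup (Fin r) ℂ) : Matrix (Fin r) (Fin r) ℂ)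
          = ((a⁻¹ : Matrix.unitaryGroup (Fin r) ℂ) : Matrix (Fin r) (Fin r) ℂ) *
            (a : Matrix (Fin r) (Fin r) ℂ) := rfl
      rw [← h, inv_mul_cancel a]; rfl
    have h2 := congrArg Matrix.det h1
    rw [Matrix.det_mul, ha, mul_one, Matrix.det_one] at h2
    exact h2

/-- The matrix of an element of `SU r`. -/
def SU.mat {r : ℕ} (g : SU r) : Matrix (Fin r) (Fin r) ℂ :=
  ((g : Matrix.unitaryGroup (Fin r) ℂ) : Matrix (Fin r) (Fin r) ℂ)

/- ### Auxiliary lemmas -/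

lemma arccos_mono {x y : ℝ} (h : x ≤ y) : Real.arccos y ≤ Real.arccos x := by
  unfold Real.arccos
  have := Real.monotone_arcsin h
  linarith

lemma cs3 (u1 u2 u3 v1 v2 v3 s t : ℝ) (hs : 0 ≤ s) (ht : 0 ≤ t)
    (hu : s^2 = u1^2+u2^2+u3^2) (hv : t^2 = v1^2+v2^2+v3^2) :
    u1*v1+u2*v2+u3*v3 ≤ s*t := by
  have h2 : (u1*v1+u2*v2+u3*v3)^2 ≤ (s*t)^2 := by
    nlinarith [sq_nonneg (u1*v2-u2*v1), sq_nonneg (u1*v3-u3*v1), sq_nonneg (u2*v3-u3*v2)]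
  nlinarith [mul_nonneg hs ht, h2]

set_option maxHeartbeats 1000000 in
lemma key_ineq (a b a' b' : ℂ) (h : Complex.normSq a + Complex.normSq b = 1)
    (h' : Complex.normSq a' + Complex.normSq b' = 1) :
    Real.arccos ((a*a' - b*(starRingEnd ℂ) b').re) ≤ Real.arccos a.re + Real.arccos a'.re := by
  set θ := Real.arccos a.re with hθ
  set θ' := Real.arccos a'.re with hθ'
  simp only [Complex.normSq_apply] at h h'
  have hx : a.re ^ 2 ≤ 1 := by nlinarith [sq_nonneg a.im, sq_nonneg b.re, sq_nonneg b.im]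
  have hx' : a'.re ^ 2 ≤ 1 := by nlinarith [sq_nonneg a'.im, sq_nonneg b'.re, sq_nonneg b'.im]
  have hx1 : -1 ≤ a.re := by nlinarith
  have hx2 : a.re ≤ 1 := by nlinarith
  have hx1' : -1 ≤ a'.re := by nlinarith
  have hx2' : a'.re ≤ 1 := by nlinarith
  by_cases hs : θ + θ' ≤ Real.pi
  · have h0 : 0 ≤ θ + θ' := by
      have := Real.arccos_nonneg a.re; have := Real.arccos_nonneg a'.re; linarith
    have hS : Real.sqrt (1 - a.re ^ 2) ^ 2 = a.im^2 + b.re^2 + b.im^2 := by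
      rw [Real.sq_sqrt (by nlinarith)]; ring_nf; ring_nf at h h'; linarith
    have hS' : Real.sqrt (1 - a'.re ^ 2) ^ 2 = a'.im^2 + b'.re^2 + b'.im^2 := by
      rw [Real.sq_sqrt (by nlinarith)]; ring_nf; ring_nf at h h'; linarith
    have hdot : a.im * a'.im + b.re * b'.re + b.im * b'.im
        ≤ Real.sqrt (1 - a.re ^ 2) * Real.sqrt (1 - a'.re ^ 2) :=
      cs3 _ _ _ _ _ _ _ _ (Real.sqrt_nonneg _) (Real.sqrt_nonneg _) hS hS'
    have hcos : Real.cos (θ + θ') ≤ (a*a' - b*(starRingEnd ℂ) b').re := by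
      rw [Real.cos_add, hθ, hθ', Real.cos_arccos hx1 hx2, Real.cos_arccos hx1' hx2',
        Real.sin_arccos, Real.sin_arccos]
      simp only [Complex.sub_re, Complex.mul_re, Complex.conj_re, Complex.conj_im]
      ring_nf; ring_nf at hdot; linarith
    calc Real.arccos ((a*a' - b*(starRingEnd ℂ) b').re) ≤ Real.arccos (Real.cos (θ + θ')) :=
          arccos_mono hcos
      _ = θ + θ' := Real.arccos_cos h0 hs
  · calc Real.arccos ((a*a' - b*(starRingEnd ℂ) b').re) ≤ Real.pi := Real.arccos_le_pi _
      _ ≤ θ + θ' := le_of_not_ge hs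

lemma SU.mat_mul {r : ℕ} (g h : SU r) : SU.mat (g * h) = SU.mat g * SU.mat h := rfl
lemma SU.mat_one {r : ℕ} : SU.mat (1 : SU r) = 1 := rfl

lemma SU.mul_star (g : SU 2) : SU.mat g * star (SU.mat g) = 1 :=
  (g : Matrix.unitaryGroup (Fin 2) ℂ).2.2

lemma SU.star_mul (g : SU 2) : star (SU.mat g) * SU.mat g = 1 :=
  (g : Matrix.unitaryGroup (Fin 2) ℂ).2.1

lemma SU.det_one (g : SU 2) : (SU.mat g).det = 1 := g.2

lemma SU.adjugate_eq (g : SU 2) : (SU.mat g).adjugate = star (SU.mat g) := by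
  have h1 : SU.mat g * (SU.mat g).adjugate = 1 := by
    rw [Matrix.mul_adjugate, SU.det_one, one_smul]
  calc (SU.mat g).adjugate = (star (SU.mat g) * SU.mat g) * (SU.mat g).adjugate := by
        rw [SU.star_mul, one_mul]
    _ = star (SU.mat g) * (SU.mat g * (SU.mat g).adjugate) := by rw [mul_assoc]
    _ = star (SU.mat g) := by rw [h1, mul_one]

lemma SU.entry10 (g : SU 2) : SU.mat g 1 0 = -(starRingEnd ℂ) (SU.mat g 0 1) := by
  have h := SU.adjugate_eq g
  rw [Matrix.adjugate_fin_two] at h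
  have h2 := congrFun (congrFun h 0) 1
  simp [Matrix.star_apply] at h2
  have := congrArg (starRingEnd ℂ) h2
  simpa using this.symm

lemma SU.entry11 (g : SU 2) : SU.mat g 1 1 = (starRingEnd ℂ) (SU.mat g 0 0) := by
  have h := SU.adjugate_eq g
  rw [Matrix.adjugate_fin_two] at h
  have h2 := congrFun (congrFun h 0) 0
  simp [Matrix.star_apply] at h2
  exact h2

lemma SU.normSq_row (g : SU 2) :
    Complex.normSq (SU.mat g 0 0) + Complex.normSq (SU.mat g 0 1) = 1 := by
  have h := SU.mul_star g
  have h2 := congrFun (congrFun h 0) 0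
  simp [Matrix.mul_apply, Fin.sum_univ_two, Matrix.star_apply, Matrix.one_apply] at h2
  have : (SU.mat g 0 0 * (starRingEnd ℂ) (SU.mat g 0 0)
      + SU.mat g 0 1 * (starRingEnd ℂ) (SU.mat g 0 1)) = 1 := h2
  rw [Complex.mul_conj, Complex.mul_conj] at this
  exact_mod_cast congrArg Complex.re this

lemma SU.mul_entry00 (g h : SU 2) : SU.mat (g * h) 0 0 =
    SU.mat g 0 0 * SU.mat h 0 0 - SU.mat g 0 1 * (starRingEnd ℂ) (SU.mat h 0 1) := by
  rw [SU.mat_mul]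
  simp [Matrix.mul_apply, Fin.sum_univ_two, SU.entry10 h]
  ring

lemma diag_trace_re (μ : ℝ) :
    ((Matrix.diagonal ![Complex.exp (2 * Real.pi * Complex.I * μ),
      Complex.exp (-(2 * Real.pi * Complex.I * μ))]).trace).re
      = 2 * Real.cos (2 * Real.pi * μ) := by
  rw [Matrix.trace_fin_two]
  simp only [Matrix.diagonal_apply_eq]
  have h1 : (2 * (Real.pi:ℂ) * Complex.I * μ) = ((2*Real.pi*μ : ℝ):ℂ) * Complex.I := by
    push_cast; ring
  show (Complex.exp (2 * Real.pi * Complex.I * μ)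
      + Complex.exp (-(2 * Real.pi * Complex.I * μ))).re = _
  rw [h1, show -(((2*Real.pi*μ : ℝ):ℂ) * Complex.I)
      = ((-(2*Real.pi*μ) : ℝ):ℂ) * Complex.I by push_cast; ring,
    Complex.add_re, Complex.exp_ofReal_mul_I_re, Complex.exp_ofReal_mul_I_re, Real.cos_neg]
  ring

/-- For 2/5 < μ ≤ 1/2 there is no tuple (g_1,…,g_5) in SU(2), with each g_i
conjugate to diag(e^{2πiμ}, e^{−2πiμ}), satisfying g_1g_2g_3g_4g_5 = 1: the moduli space
M_5(μ) is empty in the third chamber. -/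
theorem no_pentagon_in_third_chamber (μ : ℝ) (hμl : 2 / 5 < μ) (hμr : μ ≤ 1 / 2)
    (g : Fin 5 → SU 2)
    (hconj : ∀ i : Fin 5, ∃ u : SU 2, SU.mat (g i) =
      SU.mat u *
        Matrix.diagonal ![Complex.exp (2 * Real.pi * Complex.I * μ),
          Complex.exp (-(2 * Real.pi * Complex.I * μ))] *
        SU.mat u⁻¹)
    (hprod : g 0 * g 1 * g 2 * g 3 * g 4 = 1) : False := by
  have hpi := Real.pi_pos
  -- step 0: each `g i` has `(g i)₀₀.re = cos (2πμ)`
  have hre : ∀ i : Fin 5, (SU.mat (g i) 0 0).re = Real.cos (2 * Real.pi * μ) := by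
    intro i
    obtain ⟨u, hmat⟩ := hconj i
    have hVU : SU.mat u⁻¹ * SU.mat u = 1 := by
      rw [← SU.mat_mul, inv_mul_cancel u, SU.mat_one]
    have htr : (SU.mat (g i)).trace
        = (Matrix.diagonal ![Complex.exp (2 * Real.pi * Complex.I * μ),
            Complex.exp (-(2 * Real.pi * Complex.I * μ))]).trace := by
      rw [hmat, Matrix.trace_mul_comm, ← mul_assoc, hVU, one_mul]
    have htf : (SU.mat (g i)).trace = SU.mat (g i) 0 0 + SU.mat (g i) 1 1 :=
      Matrix.trace_fin_two _
    have h2 : (SU.mat (g i) 0 0 + SU.mat (g i) 1 1).re = 2 * Real.cos (2 * Real.pi * μ) := by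
      rw [← htf, htr, diag_trace_re]
    rw [SU.entry11, Complex.add_re, Complex.conj_re] at h2
    linarith
  -- the angle of `-(g i)` is `π - 2πμ`
  have harc : ∀ i : Fin 5, Real.arccos ((-(SU.mat (g i) 0 0)).re)
      = Real.pi - 2 * Real.pi * μ := by
    intro i
    rw [Complex.neg_re, hre i, Real.arccos_neg, Real.arccos_cos (by nlinarith) (by nlinarith)]
  set α := Real.pi - 2 * Real.pi * μ with hα
  have hNneg : ∀ i : Fin 5, Complex.normSq (-(SU.mat (g i) 0 0))
      + Complex.normSq (-(SU.mat (g i) 0 1)) = 1 := by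
    intro i; simpa using SU.normSq_row (g i)
  set p2 := g 0 * g 1 with hp2
  set p3 := p2 * g 2 with hp3
  set p4 := p3 * g 3 with hp4
  -- step 1
  have s1 : Real.arccos ((SU.mat p2 0 0).re) ≤ 2 * α := by
    have h := key_ineq (-(SU.mat (g 0) 0 0)) (-(SU.mat (g 0) 0 1))
      (-(SU.mat (g 1) 0 0)) (-(SU.mat (g 1) 0 1)) (hNneg 0) (hNneg 1)
    rw [harc 0, harc 1] at h
    have e : (-(SU.mat (g 0) 0 0)) * (-(SU.mat (g 1) 0 0))
        - (-(SU.mat (g 0) 0 1)) * (starRingEnd ℂ) (-(SU.mat (g 1) 0 1))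
        = SU.mat p2 0 0 := by
      rw [hp2, SU.mul_entry00, map_neg]; ring
    rw [e] at h
    linarith
  -- step 2
  have s2 : Real.arccos ((-(SU.mat p3 0 0)).re) ≤ 3 * α := by
    have h := key_ineq (SU.mat p2 0 0) (SU.mat p2 0 1)
      (-(SU.mat (g 2) 0 0)) (-(SU.mat (g 2) 0 1)) (SU.normSq_row p2) (hNneg 2)
    rw [harc 2] at h
    have em : SU.mat p3 0 0 = SU.mat p2 0 0 * SU.mat (g 2) 0 0
        - SU.mat p2 0 1 * (starRingEnd ℂ) (SU.mat (g 2) 0 1) := by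
      rw [hp3]; exact SU.mul_entry00 p2 (g 2)
    have e : SU.mat p2 0 0 * (-(SU.mat (g 2) 0 0))
        - SU.mat p2 0 1 * (starRingEnd ℂ) (-(SU.mat (g 2) 0 1))
        = -(SU.mat p3 0 0) := by
      rw [em, map_neg]; ring
    rw [e] at h
    linarith
  -- step 3
  have hN3 : Complex.normSq (-(SU.mat p3 0 0)) + Complex.normSq (-(SU.mat p3 0 1)) = 1 := by
    simpa using SU.normSq_row p3
  have s3 : Real.arccos ((SU.mat p4 0 0).re) ≤ 4 * α := by
    have h := key_ineq (-(SU.mat p3 0 0)) (-(SU.mat p3 0 1))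
      (-(SU.mat (g 3) 0 0)) (-(SU.mat (g 3) 0 1)) hN3 (hNneg 3)
    rw [harc 3] at h
    have em : SU.mat p4 0 0 = SU.mat p3 0 0 * SU.mat (g 3) 0 0
        - SU.mat p3 0 1 * (starRingEnd ℂ) (SU.mat (g 3) 0 1) := by
      rw [hp4]; exact SU.mul_entry00 p3 (g 3)
    have e : (-(SU.mat p3 0 0)) * (-(SU.mat (g 3) 0 0))
        - (-(SU.mat p3 0 1)) * (starRingEnd ℂ) (-(SU.mat (g 3) 0 1))
        = SU.mat p4 0 0 := by
      rw [em, map_neg]; ring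
    rw [e] at h
    linarith
  -- step 4
  have s4 : Real.pi ≤ 5 * α := by
    have h := key_ineq (SU.mat p4 0 0) (SU.mat p4 0 1)
      (-(SU.mat (g 4) 0 0)) (-(SU.mat (g 4) 0 1)) (SU.normSq_row p4) (hNneg 4)
    rw [harc 4] at h
    have hp5 : p4 * g 4 = 1 := by rw [hp4, hp3, hp2]; exact hprod
    have e : SU.mat p4 0 0 * (-(SU.mat (g 4) 0 0))
        - SU.mat p4 0 1 * (starRingEnd ℂ) (-(SU.mat (g 4) 0 1))
        = -1 := by
      have e1 : SU.mat p4 0 0 * SU.mat (g 4) 0 0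
          - SU.mat p4 0 1 * (starRingEnd ℂ) (SU.mat (g 4) 0 1) = 1 := by
        rw [← SU.mul_entry00, hp5, SU.mat_one, Matrix.one_apply_eq]
      rw [map_neg]
      linear_combination -e1
    rw [e] at h
    have : ((-1 : ℂ)).re = -1 := by simp
    rw [this, Real.arccos_neg_one] at h
    linarith
  -- contradiction: 5α = 5π − 10πμ < π since μ > 2/5
  rw [hα] at s4
  nlinarith
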